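/- arXiv:2103.14272 — 3 statements merged into one kernel-verified Lean document; each statement's English description precedes it below -/
import Mathlib

section
/- Assume 0 < c < 1 (i.e., 1 + q1 < n/s). Define τ1* := √( 4 F D_de / (η³ L² σ² T (1 − c)) ) and τ2* := √( (D_ec/D_de) · (1 − c)/c ). Then for all real τ1 > 0 and τ2 > 0, Φ(τ1*, τ2*) ≤ Φ(τ1, τ2); that is, the training-time-constrained error bound Φ over positive real aggregation intervals is minimized at (τ1*, τ2*). -/
private lemma amgm_le (a b x : ℝ) (ha : 0 ≤ a) (hb : 0 ≤ b) (hx : 0 < x) :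
    2 * Real.sqrt (a * b) ≤ a / x + b * x := by
  have e : Real.sqrt (a / x) * Real.sqrt (b * x) = Real.sqrt (a * b) := by
    rw [← Real.sqrt_mul (by positivity)]
    field_simp
  nlinarith [Real.sq_sqrt (show (0:ℝ) ≤ a / x by positivity),
    Real.sq_sqrt (show (0:ℝ) ≤ b * x by positivity),
    two_mul_le_add_sq (Real.sqrt (a / x)) (Real.sqrt (b * x)), e]

private lemma amgm_eq (a b : ℝ) (ha : 0 < a) (hb : 0 < b) :
    a / Real.sqrt (a / b) + b * Real.sqrt (a / b) = 2 * Real.sqrt (a * b) := by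
  have hsa : (0:ℝ) < Real.sqrt a := Real.sqrt_pos.2 ha
  have hsb : (0:ℝ) < Real.sqrt b := Real.sqrt_pos.2 hb
  have ea : Real.sqrt a ^ 2 = a := Real.sq_sqrt ha.le
  have eb : Real.sqrt b ^ 2 = b := Real.sq_sqrt hb.le
  rw [Real.sqrt_div ha.le, Real.sqrt_mul ha.le]
  field_simp
  nlinarith [ea, eb, hsa, hsb]

/-- **Optimal aggregation intervals (Theorem 2).**
With `c = (1+q1)s/n` and `0 < c < 1`, the training-time-constrained error bound
`Φ(τ1, τ2) = (2F/(ηT))(D_comp + D_de/τ1 + D_ec/(τ1τ2))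
  + (L²η²σ²/2)[cτ1(τ2−1) + (τ1−1)] + (Lη/n)(1+q1)(1+q2)σ²`
over positive real aggregation intervals is minimized at
`τ1* = √(4 F D_de/(η³L²σ²T(1−c)))` and `τ2* = √((D_ec/D_de)·(1−c)/c)`. -/
theorem aggregation_interval_optimal
    (F T Dcomp Dde Dec L η σ q1 q2 : ℝ) (n s : ℕ)
    (hF : 0 < F) (hT : 0 < T) (hDcomp : 0 < Dcomp) (hDde : 0 < Dde) (hDec : 0 < Dec)
    (hL : 0 < L) (hη : 0 < η) (hσ : 0 < σ) (hq1 : 0 ≤ q1) (hq2 : 0 ≤ q2)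
    (hn : 1 ≤ n) (hs : 1 ≤ s)
    (c : ℝ) (hc : c = (1 + q1) * (s : ℝ) / (n : ℝ)) (hc0 : 0 < c) (hc1 : c < 1)
    (Φ : ℝ → ℝ → ℝ)
    (hΦ : ∀ τ1 τ2 : ℝ, Φ τ1 τ2 =
        2 * F / (η * T) * (Dcomp + Dde / τ1 + Dec / (τ1 * τ2))
          + L ^ 2 * η ^ 2 * σ ^ 2 / 2 * (c * τ1 * (τ2 - 1) + (τ1 - 1))
          + L * η / (n : ℝ) * (1 + q1) * (1 + q2) * σ ^ 2) :
    ∀ τ1 τ2 : ℝ, 0 < τ1 → 0 < τ2 →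
      Φ (Real.sqrt (4 * F * Dde / (η ^ 3 * L ^ 2 * σ ^ 2 * T * (1 - c))))
          (Real.sqrt ((Dec / Dde) * ((1 - c) / c)))
        ≤ Φ τ1 τ2 := by
  intro τ1 τ2 hτ1 hτ2
  have hn0 : (0:ℝ) < (n:ℝ) := by exact_mod_cast Nat.lt_of_lt_of_le Nat.zero_lt_one hn
  set A : ℝ := 2 * F / (η * T) with hA
  set K : ℝ := L ^ 2 * η ^ 2 * σ ^ 2 / 2 with hK
  have hApos : 0 < A := by positivity
  have hKpos : 0 < K := by positivity
  have h1c : 0 < 1 - c := by linarith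
  set t1 : ℝ := Real.sqrt (4 * F * Dde / (η ^ 3 * L ^ 2 * σ ^ 2 * T * (1 - c))) with ht1
  set t2 : ℝ := Real.sqrt ((Dec / Dde) * ((1 - c) / c)) with ht2
  have ht1pos : 0 < t1 := Real.sqrt_pos.2 (by positivity)
  have ht2pos : 0 < t2 := Real.sqrt_pos.2 (by positivity)
  have e1 : t1 = Real.sqrt ((A * Dde) / (K * (1 - c))) := by
    rw [ht1]; congr 1; rw [hA, hK]; field_simp; ring
  have e2 : t1 * t2 = Real.sqrt ((A * Dec) / (K * c)) := by
    rw [ht1, ht2, ← Real.sqrt_mul (by positivity)]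
    congr 1; rw [hA, hK]; field_simp; ring
  have hrw : ∀ x y : ℝ, 0 < x → 0 < y → Φ x y =
      A * Dcomp + ((A * Dde) / x + (K * (1 - c)) * x)
        + ((A * Dec) / (x * y) + (K * c) * (x * y)) - K
        + L * η / (n : ℝ) * (1 + q1) * (1 + q2) * σ ^ 2 := by
    intro x y hx hy
    rw [hΦ, hA, hK]
    field_simp
    ring
  rw [hrw τ1 τ2 hτ1 hτ2, hrw t1 t2 ht1pos ht2pos, e2, e1]
  have key1 := amgm_eq (A * Dde) (K * (1 - c)) (by positivity) (by positivity)
  have key2 := amgm_eq (A * Dec) (K * c) (by positivity) (by positivity)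
  have le1 := amgm_le (A * Dde) (K * (1 - c)) τ1 (by positivity) (by positivity) hτ1
  have le2 := amgm_le (A * Dec) (K * c) (τ1 * τ2) (by positivity) (by positivity) (by positivity)
  linarith
end

section
/- Fix τ > 0, and for τ1 ∈ (0, τ] let τ2 := τ/τ1 and define the variance term V(τ1) := (L²η²/2)·[ c·τ1(τ2 − 1) + (τ1 − 1) ]·σ² + (Lη/n)·(1 + q1)(1 + q2)·σ², where c := (1 + q1)·s/n. Then V(τ1) = (L²η²/2)·[ c·τ + (1 − c)·τ1 − 1 ]·σ² + (Lη/n)·(1 + q1)(1 + q2)·σ² for every τ1 ∈ (0, τ]; consequently, if q1 < n/s − 1 then V is strictly increasing in τ1 (frequent client-edge aggregation is preferred), while if q1 > n/s − 1 then V is strictly decreasing in τ1 (infrequent client-edge aggregation is preferred). -/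
/-- **Too much quantization suggests infrequent communication.**
Fix the total local-update product `τ1τ2 = τ > 0` between cloud aggregations, and for
`τ1 ∈ (0, τ]` let `τ2 = τ/τ1` and consider the variance term
`V(τ1) = (L²η²/2)[cτ1(τ2−1) + (τ1−1)]σ² + (Lη/n)(1+q1)(1+q2)σ²`, where
`c = (1+q1)s/n`.  Then `V(τ1) = (L²η²/2)[cτ + (1−c)τ1 − 1]σ² + (Lη/n)(1+q1)(1+q2)σ²`
for every `τ1 ∈ (0, τ]`; consequently, if `q1 < n/s − 1` then `V` is strictly increasing
on `(0, τ]` (frequent client-edge aggregation is preferred), while if `q1 > n/s − 1`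
then `V` is strictly decreasing on `(0, τ]` (infrequent client-edge aggregation is
preferred). -/
theorem variance_term_flip
    (L η σ q1 q2 : ℝ) (n s : ℕ)
    (hL : 0 < L) (hη : 0 < η) (hσ : 0 < σ) (hq1 : 0 ≤ q1) (hq2 : 0 ≤ q2)
    (hn : 1 ≤ n) (hs : 1 ≤ s)
    (c : ℝ) (hc : c = (1 + q1) * (s : ℝ) / (n : ℝ))
    (τ : ℝ) (hτ : 0 < τ)
    (V : ℝ → ℝ)
    (hV : ∀ τ1 ∈ Set.Ioc (0 : ℝ) τ, V τ1 =
        L ^ 2 * η ^ 2 / 2 * (c * τ1 * (τ / τ1 - 1) + (τ1 - 1)) * σ ^ 2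
          + L * η / (n : ℝ) * (1 + q1) * (1 + q2) * σ ^ 2) :
    (∀ τ1 ∈ Set.Ioc (0 : ℝ) τ, V τ1 =
        L ^ 2 * η ^ 2 / 2 * (c * τ + (1 - c) * τ1 - 1) * σ ^ 2
          + L * η / (n : ℝ) * (1 + q1) * (1 + q2) * σ ^ 2)
      ∧ (q1 < (n : ℝ) / (s : ℝ) - 1 → StrictMonoOn V (Set.Ioc (0 : ℝ) τ))
      ∧ ((n : ℝ) / (s : ℝ) - 1 < q1 → StrictAntiOn V (Set.Ioc (0 : ℝ) τ)) := by
  have hnpos : (0:ℝ) < (n:ℝ) := by exact_mod_cast Nat.lt_of_lt_of_le Nat.zero_lt_one hn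
  have hspos : (0:ℝ) < (s:ℝ) := by exact_mod_cast Nat.lt_of_lt_of_le Nat.zero_lt_one hs
  have hA : 0 < L ^ 2 * η ^ 2 / 2 * σ ^ 2 := by positivity
  have key : ∀ τ1 ∈ Set.Ioc (0 : ℝ) τ, V τ1 =
      L ^ 2 * η ^ 2 / 2 * (c * τ + (1 - c) * τ1 - 1) * σ ^ 2
        + L * η / (n : ℝ) * (1 + q1) * (1 + q2) * σ ^ 2 := by
    intro τ1 hτ1
    rw [hV τ1 hτ1]
    have h1 : τ1 ≠ 0 := ne_of_gt hτ1.1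
    field_simp
    ring
  refine ⟨key, ?_, ?_⟩
  · intro hlt x hx y hy hxy
    rw [key x hx, key y hy]
    have hcl : c < 1 := by
      rw [hc]
      rw [div_lt_one hnpos]
      have : q1 + 1 < (n:ℝ) / (s:ℝ) := by linarith
      calc (1 + q1) * (s:ℝ) < ((n:ℝ)/(s:ℝ)) * (s:ℝ) := by
            apply mul_lt_mul_of_pos_right _ hspos; linarith
        _ = (n:ℝ) := by field_simp
    have : (1 - c) * x < (1 - c) * y := by
      apply mul_lt_mul_of_pos_left hxy; linarith
    have h2 : L ^ 2 * η ^ 2 / 2 * (c * τ + (1 - c) * x - 1) * σ ^ 2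
        < L ^ 2 * η ^ 2 / 2 * (c * τ + (1 - c) * y - 1) * σ ^ 2 := by
      apply mul_lt_mul_of_pos_right _ (by positivity)
      apply mul_lt_mul_of_pos_left _ (by positivity)
      linarith
    linarith
  · intro hlt x hx y hy hxy
    rw [key x hx, key y hy]
    have hcl : 1 < c := by
      rw [hc]
      rw [lt_div_iff₀ hnpos]
      have : (n:ℝ) / (s:ℝ) < q1 + 1 := by linarith
      calc (1:ℝ) * (n:ℝ) = ((n:ℝ)/(s:ℝ)) * (s:ℝ) := by field_simp
        _ < (1 + q1) * (s:ℝ) := by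
            apply mul_lt_mul_of_pos_right _ hspos; linarith
    have : (1 - c) * y < (1 - c) * x := by
      apply mul_lt_mul_of_neg_left hxy; linarith
    have h2 : L ^ 2 * η ^ 2 / 2 * (c * τ + (1 - c) * y - 1) * σ ^ 2
        < L ^ 2 * η ^ 2 / 2 * (c * τ + (1 - c) * x - 1) * σ ^ 2 := by
      apply mul_lt_mul_of_pos_right _ (by positivity)
      apply mul_lt_mul_of_pos_left _ (by positivity)
      linarith
    linarith
end

section
/- Let d ≥ 1 and s ≥ 1 be integers and let Q_s be the stochastic rounding quantizer. Then for every x ∈ ℝ^d, E‖Q_s(x) − x‖² ≤ min(d/s², √d/s)·‖x‖₂²; hence Q_s satisfies the unbiased random quantizer variance condition E‖Q(x) − x‖² ≤ q‖x‖² with quantization variance parameter q = min(d/s², √d/s). -/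
open scoped BigOperators

noncomputable section


/-- The quantization level `ℓ_i` of coordinate `i`: the integer `0 ≤ ℓ < s` with
`|x_i|/‖x‖₂ ∈ [ℓ/s, (ℓ+1)/s]`. -/
def srLevel (s d : ℕ) (x : EuclideanSpace ℝ (Fin d)) (i : Fin d) : ℕ :=
  min (s - 1) ⌊(s : ℝ) * |x i| / ‖x‖⌋₊

/-- The probability that `ξ_i(x, s)` takes the upper value `(ℓ_i+1)/s`,
namely `s·|x_i|/‖x‖₂ − ℓ_i`. -/
def srProb (s d : ℕ) (x : EuclideanSpace ℝ (Fin d)) (i : Fin d) : ℝ :=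
  (s : ℝ) * |x i| / ‖x‖ - srLevel s d x i

/-- The random variable `ξ_i(x, s)` as a function of the Bernoulli outcome `b i`:
`(ℓ_i+1)/s` if `b i` and `ℓ_i/s` otherwise. -/
def srXi (s d : ℕ) (x : EuclideanSpace ℝ (Fin d)) (b : Fin d → Bool) (i : Fin d) : ℝ :=
  if b i then ((srLevel s d x i : ℝ) + 1) / s else (srLevel s d x i : ℝ) / s

/-- The stochastic rounding quantizer `Q_s(x)_i = ‖x‖₂ · sgn(x_i) · ξ_i(x, s)`
(and `Q_s(0) = 0`), as a function of the Bernoulli outcomes `b`. -/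
def srQ (s d : ℕ) (x : EuclideanSpace ℝ (Fin d)) (b : Fin d → Bool) :
    EuclideanSpace ℝ (Fin d) :=
  letI := Classical.dec (x = 0)
  if x = 0 then 0 else
    (EuclideanSpace.equiv (Fin d) ℝ).symm fun i =>
      ‖x‖ * Real.sign (x i) * srXi s d x b i

/-- The probability of the outcome `b` under the product law of the independent
Bernoulli variables: `ξ_i` takes its upper value with probability `srProb s d x i`. -/
def srWeight (s d : ℕ) (x : EuclideanSpace ℝ (Fin d)) (b : Fin d → Bool) : ℝ :=
  ∏ i : Fin d, if b i then srProb s d x i else 1 - srProb s d x i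

/-- Auxiliary: a sum over Boolean vectors of a product factorizes. -/
lemma sr_sum_prod_bool_eq {d : ℕ} (f : Fin d → Bool → ℝ) :
    ∑ b : Fin d → Bool, ∏ i, f i (b i) = ∏ i, (f i true + f i false) := by
  classical
  have h := Finset.sum_prod_piFinset (Finset.univ : Finset Bool) f
  rw [Fintype.piFinset_univ] at h
  rw [h]
  exact Finset.prod_congr rfl fun i _ => by simp

/-- **Variance bound for stochastic rounding:** for every `x ∈ ℝ^d`,
`E‖Q_s(x) − x‖² ≤ min(d/s², √d/s)·‖x‖₂²`; hence `Q_s` satisfies the unbiased random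
quantizer variance condition `E‖Q(x) − x‖² ≤ q‖x‖²` with parameter
`q = min(d/s², √d/s)`. -/
theorem stochastic_rounding_variance
    (d s : ℕ) (hd : 1 ≤ d) (hs : 1 ≤ s) (x : EuclideanSpace ℝ (Fin d)) :
    ∑ b : Fin d → Bool, srWeight s d x b * ‖srQ s d x b - x‖ ^ 2
      ≤ min ((d : ℝ) / (s : ℝ) ^ 2) (Real.sqrt d / s) * ‖x‖ ^ 2 := by
  classical
  have hs0 : (s : ℝ) ≠ 0 := by
    have : 0 < s := hs
    positivity
  by_cases hx0 : x = 0
  · subst hx0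
    have h1 : ∀ b : Fin d → Bool,
        srWeight s d (0 : EuclideanSpace ℝ (Fin d)) b
          * ‖srQ s d (0 : EuclideanSpace ℝ (Fin d)) b - 0‖ ^ 2 = 0 := by
      intro b
      have hq : srQ s d (0 : EuclideanSpace ℝ (Fin d)) b = 0 := by simp [srQ]
      rw [hq]
      simp
    rw [Finset.sum_congr rfl fun b _ => h1 b]
    have hmin : (0:ℝ) ≤ min ((d : ℝ) / (s : ℝ) ^ 2) (Real.sqrt d / s) := by
      refine le_min (by positivity) (by positivity)
    simp
  · have hN : (0:ℝ) < ‖x‖ := norm_pos_iff.mpr hx0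
    have hNne : ‖x‖ ≠ 0 := ne_of_gt hN
    set p : Fin d → ℝ := srProb s d x with hp
    set w : Fin d → Bool → ℝ := fun i t => if t then p i else 1 - p i with hw
    set c : Fin d → Bool → ℝ := fun i t =>
      (‖x‖ * Real.sign (x i) *
        (if t then ((srLevel s d x i : ℝ) + 1) / s else (srLevel s d x i : ℝ) / s) - x i) ^ 2
      with hc
    -- rewrite each term
    have hterm : ∀ b : Fin d → Bool,
        srWeight s d x b * ‖srQ s d x b - x‖ ^ 2
          = (∏ i, w i (b i)) * ∑ i, c i (b i) := by
      intro b
      have h1 : srWeight s d x b = ∏ i, w i (b i) := rfl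
      have h2 : ‖srQ s d x b - x‖ ^ 2 = ∑ i, c i (b i) := by
        rw [EuclideanSpace.norm_eq, Real.sq_sqrt (by positivity)]
        refine Finset.sum_congr rfl fun i _ => ?_
        have happ : (srQ s d x b - x) i
            = ‖x‖ * Real.sign (x i) * srXi s d x b i - x i := by
          have h3 : srQ s d x b i = ‖x‖ * Real.sign (x i) * srXi s d x b i := by
            simp only [srQ]
            rw [if_neg hx0]
            rfl
          calc (srQ s d x b - x) i = srQ s d x b i - x i := rfl
            _ = _ := by rw [h3]
        rw [happ, Real.norm_eq_abs, sq_abs]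
        rfl
      rw [h1, h2]
    rw [Finset.sum_congr rfl fun b _ => hterm b]
    -- factorize
    have hw1 : ∀ j, w j true + w j false = 1 := by
      intro j; simp [hw]
    have hmain : ∑ b : Fin d → Bool, (∏ i, w i (b i)) * (∑ i, c i (b i))
        = ∑ i, (w i true * c i true + w i false * c i false) := by
      calc ∑ b : Fin d → Bool, (∏ i, w i (b i)) * (∑ i, c i (b i))
          = ∑ b : Fin d → Bool, ∑ i,
              ∏ j, (w j (b j) * (if j = i then c j (b j) else 1)) := by
            refine Finset.sum_congr rfl fun b _ => ?_
            rw [Finset.mul_sum]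
            refine Finset.sum_congr rfl fun i _ => ?_
            rw [Finset.prod_mul_distrib]
            congr 1
            simp
        _ = ∑ i, ∑ b : Fin d → Bool,
              ∏ j, (w j (b j) * (if j = i then c j (b j) else 1)) := Finset.sum_comm
        _ = ∑ i, ∏ j, (w j true * (if j = i then c j true else 1)
              + w j false * (if j = i then c j false else 1)) := by
            exact Finset.sum_congr rfl fun i _ =>
              sr_sum_prod_bool_eq fun j t => w j t * (if j = i then c j t else 1)
        _ = ∑ i, (w i true * c i true + w i false * c i false) := by
            refine Finset.sum_congr rfl fun i _ => ?_
            rw [Finset.prod_eq_single i ?_ ?_]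
            · simp
            · intro j _ hj
              rw [if_neg hj, if_neg hj, mul_one, mul_one, hw1 j]
            · intro h; exact absurd (Finset.mem_univ i) h
    rw [hmain]
    -- per-coordinate value
    have hval : ∀ i : Fin d, w i true * c i true + w i false * c i false
        = ‖x‖ ^ 2 / (s : ℝ) ^ 2 * (p i * (1 - p i)) := by
      intro i
      have hwt : w i true = p i := rfl
      have hwf : w i false = 1 - p i := rfl
      have hct : c i true
          = (‖x‖ * Real.sign (x i) * (((srLevel s d x i : ℝ) + 1) / s) - x i) ^ 2 := by
        simp [hc]
      have hcf : c i false
          = (‖x‖ * Real.sign (x i) * ((srLevel s d x i : ℝ) / s) - x i) ^ 2 := by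
        simp [hc]
      rw [hwt, hwf, hct, hcf]
      by_cases hxi : x i = 0
      · have hl : srLevel s d x i = 0 := by simp [srLevel, hxi]
        have hpi : p i = 0 := by simp [hp, srProb, hxi, hl]
        simp [hxi, hpi, Real.sign_zero, hl]
      · have hg : Real.sign (x i) ^ 2 = 1 := by
          rcases lt_or_gt_of_ne hxi with h | h
          · rw [Real.sign_of_neg h]; ring
          · rw [Real.sign_of_pos h]; ring
        set ℓ : ℝ := (srLevel s d x i : ℝ) with hℓ
        set g : ℝ := Real.sign (x i) with hgdef
        set a : ℝ := |x i| with hadef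
        set q : ℝ := p i with hq
        have habs : a = ‖x‖ * (ℓ + q) / s := by
          rw [hq, hp, srProb, ← hℓ, ← hadef]
          field_simp
          ring
        have hxga : x i = g * a := by
          rw [hgdef, hadef]
          rcases lt_or_gt_of_ne hxi with h | h
          · rw [Real.sign_of_neg h, abs_of_neg h]; ring
          · rw [Real.sign_of_pos h, abs_of_pos h]; ring
        rw [hxga, habs]
        linear_combination (‖x‖ / s) ^ 2 * q * (1 - q) * hg
    rw [Finset.sum_congr rfl fun i _ => hval i, ← Finset.mul_sum]
    -- final bounds
    set S : ℝ := ∑ i, p i * (1 - p i) with hS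
    have hfac : (0:ℝ) ≤ ‖x‖ ^ 2 / (s : ℝ) ^ 2 := by positivity
    rw [min_mul_of_nonneg _ _ (by positivity : (0:ℝ) ≤ ‖x‖ ^ 2)]
    refine le_min ?_ ?_
    · -- bound by d / s^2
      have hS1 : S ≤ (d : ℝ) := by
        calc S ≤ ∑ _i : Fin d, (1:ℝ) :=
              Finset.sum_le_sum fun i _ => by nlinarith [sq_nonneg (p i - 1/2)]
          _ = (d : ℝ) := by simp
      calc ‖x‖ ^ 2 / (s : ℝ) ^ 2 * S ≤ ‖x‖ ^ 2 / (s : ℝ) ^ 2 * (d : ℝ) := by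
            exact mul_le_mul_of_nonneg_left hS1 hfac
        _ = (d : ℝ) / (s : ℝ) ^ 2 * ‖x‖ ^ 2 := by ring
    · -- bound by sqrt d / s
      have hnormsq : ∑ i, (x i) ^ 2 = ‖x‖ ^ 2 := by
        rw [EuclideanSpace.norm_eq, Real.sq_sqrt (by positivity)]
        simp [sq_abs]
      have hCS : ∑ i, |x i| ≤ Real.sqrt d * ‖x‖ := by
        have h := Real.sum_mul_le_sqrt_mul_sqrt Finset.univ
          (fun _ : Fin d => (1:ℝ)) (fun i => |x i|)
        simp only [one_mul, one_pow, sq_abs] at h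
        calc ∑ i, |x i| ≤ Real.sqrt (∑ _i : Fin d, (1:ℝ)) * Real.sqrt (∑ i, (x i) ^ 2) := h
          _ = Real.sqrt d * ‖x‖ := by
              rw [hnormsq, Real.sqrt_sq (norm_nonneg x)]
              congr 1
              simp
      have hS2 : S ≤ (s : ℝ) * Real.sqrt d := by
        have hstep : ∀ i : Fin d, p i * (1 - p i) ≤ (s : ℝ) * |x i| / ‖x‖ := by
          intro i
          have h1 : p i * (1 - p i) ≤ p i := by nlinarith [sq_nonneg (p i)]
          have h2 : p i ≤ (s : ℝ) * |x i| / ‖x‖ := by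
            have hl : (0:ℝ) ≤ (srLevel s d x i : ℝ) := Nat.cast_nonneg _
            have : p i = (s : ℝ) * |x i| / ‖x‖ - (srLevel s d x i : ℝ) := rfl
            linarith [this.le, this.ge]
          linarith
        calc S ≤ ∑ i, (s : ℝ) * |x i| / ‖x‖ := Finset.sum_le_sum fun i _ => hstep i
          _ = (s : ℝ) / ‖x‖ * ∑ i, |x i| := by
              rw [Finset.mul_sum]; exact Finset.sum_congr rfl fun i _ => by ring
          _ ≤ (s : ℝ) / ‖x‖ * (Real.sqrt d * ‖x‖) := by
              exact mul_le_mul_of_nonneg_left hCS (by positivity)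
          _ = (s : ℝ) * Real.sqrt d := by field_simp
      calc ‖x‖ ^ 2 / (s : ℝ) ^ 2 * S
          ≤ ‖x‖ ^ 2 / (s : ℝ) ^ 2 * ((s : ℝ) * Real.sqrt d) :=
            mul_le_mul_of_nonneg_left hS2 hfac
        _ = Real.sqrt d / (s : ℝ) * ‖x‖ ^ 2 := by field_simp
end
end
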